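/- For every statistics parameter α ∈ [0,1], the two-anyon Neumann energy on the unit square satisfies E^N_2(α) ≤ 2π². -/

import Mathlib

noncomputable section

open MeasureTheory Real Set
open scoped BigOperators Topology

/-- The plane `ℝ²`, with points written as pairs. -/
abbrev Plane : Type := ℝ × ℝ

/-- Configuration space of `N` particles in the plane. -/
abbrev Config (N : ℕ) : Type := Fin N → Plane

/-- `x^{-⊥} := (-y, x)/(x² + y²)` for `x = (x, y) ∈ ℝ²`. -/
def perpInv (v : Plane) : Plane :=
  (-v.2 / (v.1 ^ 2 + v.2 ^ 2), v.1 / (v.1 ^ 2 + v.2 ^ 2))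

/-- The Aharonov–Bohm potential `A_j(x) = ∑_{k ≠ j} (x_j - x_k)^{-⊥}`. -/
def abPot (N : ℕ) (j : Fin N) (x : Config N) : Plane :=
  ∑ k ∈ Finset.univ.erase j, perpInv (x j - x k)

/-- Partial derivative of `Ψ` at `x` in direction `v` of the `j`-th particle. -/
def pder (N : ℕ) (j : Fin N) (v : Plane) (Ψ : Config N → ℂ) (x : Config N) : ℂ :=
  fderiv ℝ Ψ x (Pi.single j v)

/-- The two components of `D_j Ψ = -i ∇_{x_j} Ψ + α A_j Ψ` at `x`. -/
def DOp (N : ℕ) (α : ℝ) (j : Fin N) (Ψ : Config N → ℂ) (x : Config N) : ℂ × ℂ :=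
  (-Complex.I * pder N j (1, 0) Ψ x + Complex.ofReal (α * (abPot N j x).1) * Ψ x,
   -Complex.I * pder N j (0, 1) Ψ x + Complex.ofReal (α * (abPot N j x).2) * Ψ x)

/-- `|D_j Ψ(x)|²`, the squared Euclidean norm of the vector `D_j Ψ(x) ∈ ℂ²`. -/
def DSq (N : ℕ) (α : ℝ) (j : Fin N) (Ψ : Config N → ℂ) (x : Config N) : ℝ :=
  ‖(DOp N α j Ψ x).1‖ ^ 2 + ‖(DOp N α j Ψ x).2‖ ^ 2

/-- The diagonal set `{x : x_j = x_k for some j ≠ k}`. -/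
def diagSet (N : ℕ) : Set (Config N) := {x | ∃ j k : Fin N, j ≠ k ∧ x j = x k}

/-- Admissible wave functions: smooth, symmetric, vanishing on a neighbourhood of
the diagonal set. -/
structure Admissible (N : ℕ) (Ψ : Config N → ℂ) : Prop where
  smooth : ContDiff ℝ (⊤ : ℕ∞) Ψ
  symm : ∀ (σ : Equiv.Perm (Fin N)) (x : Config N), Ψ (x ∘ σ) = Ψ x
  vanishes : ∃ U : Set (Config N), IsOpen U ∧ diagSet N ⊆ U ∧ ∀ x ∈ U, Ψ x = 0

/-- `Ω^N` as a subset of configuration space. -/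
def cube (N : ℕ) (Ω : Set Plane) : Set (Config N) := Set.univ.pi fun _ => Ω

/-- Total kinetic energy `∑_j ∫_{Ω^N} |D_j Ψ|²`. -/
def kinE (N : ℕ) (α : ℝ) (Ω : Set Plane) (Ψ : Config N → ℂ) : ℝ :=
  ∑ j, ∫ x in cube N Ω, DSq N α j Ψ x

/-- `∫_{Ω^N} |Ψ|²`. -/
def normSq (N : ℕ) (Ω : Set Plane) (Ψ : Config N → ℂ) : ℝ :=
  ∫ x in cube N Ω, ‖Ψ x‖ ^ 2

/-- Neumann ground-state energy of `N` anyons with statistics parameter `α` on `Ω`,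
with the convention that it is `0` for `N = 0`. -/
def neumannE (N : ℕ) (α : ℝ) (Ω : Set Plane) : ℝ :=
  if N = 0 then 0 else
    sInf {E | ∃ Ψ : Config N → ℂ, Admissible N Ψ ∧ normSq N Ω Ψ = 1 ∧ E = kinE N α Ω Ψ}

/-- Dirichlet ground-state energy of `N` anyons with statistics parameter `α` on `Ω`. -/
def dirichletE (N : ℕ) (α : ℝ) (Ω : Set Plane) : ℝ :=
  sInf {E | ∃ Ψ : Config N → ℂ, Admissible N Ψ ∧ IsCompact (tsupport Ψ) ∧
    tsupport Ψ ⊆ cube N Ω ∧ normSq N Ω Ψ = 1 ∧ E = kinE N α Ω Ψ}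

/-- The open unit square `Q₀ = (0,1)²`. -/
def Q0 : Set Plane := Set.Ioo (0 : ℝ) 1 ×ˢ Set.Ioo (0 : ℝ) 1

/-- `E^N_N(α)`, the Neumann energy on the unit square. -/
def EN (N : ℕ) (α : ℝ) : ℝ := neumannE N α Q0

/-- `E^D_N(α)`, the Dirichlet energy on the unit square. -/
def ED (N : ℕ) (α : ℝ) : ℝ := dirichletE N α Q0

/-- One-particle density `ρ_Ψ` of a wave function of `n+1` particles. -/
def density (n : ℕ) (Ψ : Config (n + 1) → ℂ) (y : Plane) : ℝ :=
  (n + 1) * ∫ z : Config n, ‖Ψ (Fin.cons y z)‖ ^ 2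

/-!
Take the trial state `Ψ(x₁, x₂) = F(|x₁ - x₂|²)`, where `F` is a smoothing of `t ↦ t` that
vanishes for `t ≤ ε`. Because `Ψ` is real, `|D_jΨ|² = |∇_jΨ|² + α² |A_j|² Ψ²`, and with
`|A_j|² = |x₁ - x₂|⁻²`, `0 ≤ F' ≤ 1` and `F(t) ≤ t` this is at most `5 |x₁ - x₂|²`.
Under Lebesgue measure on `Q₀²` the coordinate differences `u = x₁¹ - x₂¹` and
`v = x₁² - x₂²` are independent, with `∫ u² = 1/6` and `∫ u⁴ = 1/15`, so
`∫ |x₁ - x₂|² = 1/3` and `∫ |x₁ - x₂|⁴ = 17/90`. Hence the Rayleigh quotient of `Ψ` is about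
`(10/3) / (17/90) = 300/17 < 18 < 2π²`.
-/

section SmoothRamp

variable {ε t : ℝ}

def smoothRamp (ε t : ℝ) : ℝ := ∫ s in (0 : ℝ)..t, smoothTransition ((s - ε) / ε)

theorem continuous_smoothTransition_sub_div (ε : ℝ) :
    Continuous fun s : ℝ => smoothTransition ((s - ε) / ε) :=
  smoothTransition.continuous.comp ((continuous_id.sub continuous_const).div_const ε)

theorem hasDerivAt_smoothRamp (ε t : ℝ) :
    HasDerivAt (smoothRamp ε) (smoothTransition ((t - ε) / ε)) t :=
  intervalIntegral.integral_hasDerivAt_right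
    ((continuous_smoothTransition_sub_div ε).intervalIntegrable _ _)
    ((continuous_smoothTransition_sub_div ε).stronglyMeasurableAtFilter _ _)
    (continuous_smoothTransition_sub_div ε).continuousAt

theorem contDiff_smoothRamp (ε : ℝ) : ContDiff ℝ (⊤ : ℕ∞) (smoothRamp ε) := by
  rw [contDiff_infty_iff_deriv]
  refine ⟨fun t => (hasDerivAt_smoothRamp ε t).differentiableAt, ?_⟩
  rw [funext fun t => (hasDerivAt_smoothRamp ε t).deriv]
  exact smoothTransition.contDiff.comp ((contDiff_id.sub contDiff_const).div_const ε)

theorem smoothRamp_eq_zero (hε : 0 ≤ ε) (ht : t ≤ ε) : smoothRamp ε t = 0 := by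
  rw [smoothRamp, intervalIntegral.integral_congr (g := fun _ => (0 : ℝ)),
    intervalIntegral.integral_zero]
  intro s hs
  exact smoothTransition.zero_of_nonpos <|
    div_nonpos_of_nonpos_of_nonneg (by linarith [hs.2, max_le hε ht]) hε

theorem smoothRamp_nonneg (ht : 0 ≤ t) : 0 ≤ smoothRamp ε t :=
  intervalIntegral.integral_nonneg ht fun _ _ => smoothTransition.nonneg _

theorem smoothRamp_le_self (ht : 0 ≤ t) : smoothRamp ε t ≤ t := by
  simpa [smoothRamp] using intervalIntegral.integral_mono_on ht
    ((continuous_smoothTransition_sub_div ε).intervalIntegrable 0 t)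
    (intervalIntegrable_const (μ := volume))
    fun s _ => smoothTransition.le_one ((s - ε) / ε)

theorem sub_two_mul_le_smoothRamp (hε : 0 < ε) (ht : 2 * ε ≤ t) : t - 2 * ε ≤ smoothRamp ε t := by
  have hslope : ∫ s in (2 * ε)..t, smoothTransition ((s - ε) / ε) = t - 2 * ε := by
    rw [intervalIntegral.integral_congr (g := fun _ => (1 : ℝ)), intervalIntegral.integral_const,
      smul_eq_mul, mul_one]
    intro s hs
    rw [uIcc_of_le ht] at hs
    exact smoothTransition.one_of_one_le <| by rw [le_div_iff₀ hε]; linarith [hs.1]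
  have hsplit := intervalIntegral.integral_add_adjacent_intervals (μ := volume)
    (a := 0) (b := 2 * ε) (c := t)
    ((continuous_smoothTransition_sub_div ε).intervalIntegrable _ _)
    ((continuous_smoothTransition_sub_div ε).intervalIntegrable _ _)
  have hinit := smoothRamp_nonneg (ε := ε) (t := 2 * ε) (by linarith)
  rw [smoothRamp] at hinit ⊢
  linarith

theorem sq_sub_le_smoothRamp_sq (hε : 0 < ε) (ht : 0 ≤ t) :
    t ^ 2 - 4 * ε * t ≤ smoothRamp ε t ^ 2 := by
  rcases le_or_gt (2 * ε) t with hlarge | hsmall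
  · nlinarith [sub_two_mul_le_smoothRamp hε hlarge]
  · nlinarith [sq_nonneg (smoothRamp ε t)]

end SmoothRamp

section Energy

variable {N : ℕ} {α : ℝ} {Ω : Set Plane} {Ψ : Config N → ℂ}

theorem DSq_nonneg (j : Fin N) (x : Config N) : 0 ≤ DSq N α j Ψ x := by
  unfold DSq; positivity

theorem kinE_nonneg : 0 ≤ kinE N α Ω Ψ :=
  Finset.sum_nonneg fun j _ => integral_nonneg (DSq_nonneg j)

theorem Admissible.const_mul (hΨ : Admissible N Ψ) (c : ℂ) : Admissible N fun x => c * Ψ x := by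
  obtain ⟨U, hU, hdiag, hzero⟩ := hΨ.vanishes
  exact ⟨contDiff_const.mul hΨ.smooth, fun σ x => by rw [hΨ.symm σ x],
    ⟨U, hU, hdiag, fun x hx => by rw [hzero x hx, mul_zero]⟩⟩

theorem normSq_const_mul (c : ℂ) : normSq N Ω (fun x => c * Ψ x) = ‖c‖ ^ 2 * normSq N Ω Ψ := by
  simp only [normSq, norm_mul, mul_pow, integral_const_mul]

theorem DSq_const_mul {x : Config N} (hΨ : DifferentiableAt ℝ Ψ x) (c : ℂ) (j : Fin N) :
    DSq N α j (fun y => c * Ψ y) x = ‖c‖ ^ 2 * DSq N α j Ψ x := by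
  have hpder : ∀ v, pder N j v (fun y => c * Ψ y) x = c * pder N j v Ψ x := fun v => by
    simp only [pder, fderiv_const_mul hΨ, smul_apply, smul_eq_mul]
  have hfactor : ∀ a b r : ℂ, -Complex.I * (c * a) + r * (c * b) = c * (-Complex.I * a + r * b) :=
    fun _ _ _ => by ring
  simp only [DSq, DOp, hpder, hfactor, norm_mul, mul_pow]
  ring

theorem kinE_const_mul (hΨ : Differentiable ℝ Ψ) (c : ℂ) :
    kinE N α Ω (fun x => c * Ψ x) = ‖c‖ ^ 2 * kinE N α Ω Ψ := by
  simp only [kinE, DSq_const_mul (hΨ _), integral_const_mul, Finset.mul_sum]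

theorem neumannE_le_kinE_div_normSq (hN : N ≠ 0) (hΨ : Admissible N Ψ) (hpos : 0 < normSq N Ω Ψ) :
    neumannE N α Ω ≤ kinE N α Ω Ψ / normSq N Ω Ψ := by
  set c : ℂ := Complex.ofReal (√(normSq N Ω Ψ))⁻¹
  have hc : ‖c‖ ^ 2 = (normSq N Ω Ψ)⁻¹ := by
    rw [Complex.norm_real, norm_inv, Real.norm_of_nonneg (Real.sqrt_nonneg _), inv_pow,
      Real.sq_sqrt hpos.le]
  have hdiff : Differentiable ℝ Ψ := hΨ.smooth.differentiable (by simp)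
  rw [neumannE, if_neg hN]
  refine le_of_le_of_eq (csInf_le ⟨0, ?_⟩ ⟨_, hΨ.const_mul c, ?_, rfl⟩) ?_
  · rintro _ ⟨Φ, -, -, rfl⟩
    exact kinE_nonneg
  · rw [normSq_const_mul, hc, inv_mul_cancel₀ hpos.ne']
  · rw [kinE_const_mul hdiff, hc, div_eq_inv_mul]

end Energy

/-- The Euclidean squared norm (the norm of `Plane = ℝ × ℝ` is the sup norm). -/
def euclidNormSq (v : Plane) : ℝ := v.1 ^ 2 + v.2 ^ 2

theorem euclidNormSq_nonneg (v : Plane) : 0 ≤ euclidNormSq v := by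
  unfold euclidNormSq; positivity

theorem euclidNormSq_neg (v : Plane) : euclidNormSq (-v) = euclidNormSq v := by
  simp [euclidNormSq]

@[fun_prop]
theorem continuous_euclidNormSq : Continuous euclidNormSq := by
  unfold euclidNormSq; fun_prop

theorem euclidNormSq_perpInv (v : Plane) : euclidNormSq (perpInv v) = (euclidNormSq v)⁻¹ := by
  unfold euclidNormSq perpInv
  rcases eq_or_ne (v.1 ^ 2 + v.2 ^ 2) 0 with h | h
  · simp [h]
  · field_simp
    ring

theorem norm_neg_I_mul_add_sq (a b : ℝ) : ‖-Complex.I * a + b‖ ^ 2 = a ^ 2 + b ^ 2 := by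
  rw [Complex.sq_norm, show -Complex.I * a + b = b + ((-a : ℝ) : ℂ) * Complex.I by push_cast; ring,
    Complex.normSq_add_mul_I]
  ring

theorem DSq_ofReal {N : ℕ} {α : ℝ} {φ : Config N → ℝ} {x : Config N}
    (hφ : DifferentiableAt ℝ φ x) (j : Fin N) :
    DSq N α j (fun y => (φ y : ℂ)) x =
      fderiv ℝ φ x (Pi.single j (1, 0)) ^ 2 + fderiv ℝ φ x (Pi.single j (0, 1)) ^ 2
        + α ^ 2 * euclidNormSq (abPot N j x) * φ x ^ 2 := by
  have hderiv : HasFDerivAt (fun y => (φ y : ℂ)) (Complex.ofRealCLM.comp (fderiv ℝ φ x)) x :=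
    Complex.ofRealCLM.hasFDerivAt.comp x hφ.hasFDerivAt
  have hpder : ∀ v, pder N j v (fun y => (φ y : ℂ)) x = (fderiv ℝ φ x (Pi.single j v) : ℂ) :=
    fun v => by rw [pder, hderiv.fderiv]; rfl
  simp only [DSq, DOp, hpder, ← Complex.ofReal_mul, norm_neg_I_mul_add_sq, euclidNormSq]
  ring

def relPos : Config 2 →L[ℝ] Plane := .proj 0 - .proj 1

theorem relPos_apply (x : Config 2) : relPos x = x 0 - x 1 := rfl

theorem euclidNormSq_abPot_two (j : Fin 2) (x : Config 2) :
    euclidNormSq (abPot 2 j x) = (euclidNormSq (relPos x))⁻¹ := by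
  have hswap : euclidNormSq (x 1 - x 0) = euclidNormSq (x 0 - x 1) := by
    rw [← neg_sub, euclidNormSq_neg]
  fin_cases j <;> simp [abPot, euclidNormSq_perpInv, relPos_apply, hswap]

theorem relPos_single_sq (g : Plane →L[ℝ] ℝ) (j : Fin 2) (v : Plane) :
    g (relPos (Pi.single j v)) ^ 2 = g v ^ 2 := by
  fin_cases j <;> simp [relPos_apply]

theorem DSq_comp_relPos {α : ℝ} {g : Plane → ℝ} {x : Config 2}
    (hg : DifferentiableAt ℝ g (relPos x)) (j : Fin 2) :
    DSq 2 α j (fun y => (g (relPos y) : ℂ)) x =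
      fderiv ℝ g (relPos x) (1, 0) ^ 2 + fderiv ℝ g (relPos x) (0, 1) ^ 2
        + α ^ 2 * g (relPos x) ^ 2 / euclidNormSq (relPos x) := by
  have hderiv : fderiv ℝ (fun y => g (relPos y)) x = (fderiv ℝ g (relPos x)).comp relPos :=
    (hg.hasFDerivAt.comp x relPos.hasFDerivAt).fderiv
  rw [DSq_ofReal (φ := fun y => g (relPos y)) (hg.comp x relPos.differentiableAt) j, hderiv]
  simp only [ContinuousLinearMap.comp_apply, relPos_single_sq, euclidNormSq_abPot_two]
  ring

section TrialState

variable {ε α : ℝ}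

def trialProfile (ε : ℝ) (v : Plane) : ℝ := smoothRamp ε (euclidNormSq v)

def trialState (ε : ℝ) : Config 2 → ℂ := fun x => trialProfile ε (relPos x)

theorem hasFDerivAt_trialProfile (ε : ℝ) (v : Plane) :
    HasFDerivAt (trialProfile ε)
      (smoothTransition ((euclidNormSq v - ε) / ε) •
        ((2 * v.1) • ContinuousLinearMap.fst ℝ ℝ ℝ
          + (2 * v.2) • ContinuousLinearMap.snd ℝ ℝ ℝ)) v := by
  have hsq := ((hasFDerivAt_fst (𝕜 := ℝ) (p := v)).pow 2).add
    ((hasFDerivAt_snd (𝕜 := ℝ) (p := v)).pow 2)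
  simp only [nsmul_eq_mul, Nat.cast_ofNat, Nat.add_one_sub_one, pow_one] at hsq
  exact (hasDerivAt_smoothRamp ε _).comp_hasFDerivAt v hsq

theorem relPos_comp_perm (σ : Equiv.Perm (Fin 2)) (x : Config 2) :
    relPos (x ∘ σ) = relPos x ∨ relPos (x ∘ σ) = -relPos x := by
  have hσ : σ 0 ≠ σ 1 := σ.injective.ne (by decide)
  have hcases : (σ 0 = 0 ∧ σ 1 = 1) ∨ (σ 0 = 1 ∧ σ 1 = 0) := by omega
  rcases hcases with ⟨h0, h1⟩ | ⟨h0, h1⟩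
  · left; simp [relPos_apply, h0, h1]
  · right; simp [relPos_apply, h0, h1]

theorem relPos_eq_zero_of_mem_diagSet {x : Config 2} (hx : x ∈ diagSet 2) : relPos x = 0 := by
  obtain ⟨j, k, hjk, hx⟩ := hx
  fin_cases j <;> fin_cases k <;> simp_all [relPos_apply]

theorem trialState_admissible (hε : 0 < ε) : Admissible 2 (trialState ε) where
  smooth := by
    have hsq : ContDiff ℝ (⊤ : ℕ∞) euclidNormSq := by unfold euclidNormSq; fun_prop
    exact Complex.ofRealCLM.contDiff.comp
      (((contDiff_smoothRamp ε).comp hsq).comp relPos.contDiff)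
  symm σ x := by
    rcases relPos_comp_perm σ x with h | h <;>
      simp [trialState, trialProfile, h, euclidNormSq_neg]
  vanishes := by
    refine ⟨{x | euclidNormSq (relPos x) < ε}, isOpen_lt (by fun_prop) continuous_const,
      fun x hx => ?_, fun x hx => ?_⟩
    · simpa [relPos_eq_zero_of_mem_diagSet hx, euclidNormSq] using hε
    · simp [trialState, trialProfile, smoothRamp_eq_zero hε.le (le_of_lt hx)]

theorem DSq_trialState (j : Fin 2) (x : Config 2) :
    DSq 2 α j (trialState ε) x =
      4 * smoothTransition ((euclidNormSq (relPos x) - ε) / ε) ^ 2 * euclidNormSq (relPos x)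
        + α ^ 2 * smoothRamp ε (euclidNormSq (relPos x)) ^ 2 / euclidNormSq (relPos x) := by
  unfold trialState
  rw [DSq_comp_relPos (hasFDerivAt_trialProfile ε _).differentiableAt,
    (hasFDerivAt_trialProfile ε _).fderiv]
  simp only [smul_apply, add_apply, ContinuousLinearMap.coe_fst', ContinuousLinearMap.coe_snd',
    smul_eq_mul, mul_one, mul_zero, add_zero, zero_add, trialProfile]
  unfold euclidNormSq
  ring

theorem DSq_trialState_le (hα : |α| ≤ 1) (j : Fin 2) (x : Config 2) :
    DSq 2 α j (trialState ε) x ≤ 5 * euclidNormSq (relPos x) := by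
  rw [DSq_trialState]
  set r := euclidNormSq (relPos x)
  have hr : 0 ≤ r := euclidNormSq_nonneg _
  have hgrad : 4 * smoothTransition ((r - ε) / ε) ^ 2 * r ≤ 4 * r := by
    have := pow_le_one₀ (n := 2) (smoothTransition.nonneg ((r - ε) / ε))
      (smoothTransition.le_one _)
    nlinarith
  have hmag : α ^ 2 * smoothRamp ε r ^ 2 / r ≤ r := by
    have hα2 : α ^ 2 ≤ 1 := (sq_le_one_iff_abs_le_one α).2 hα
    have hramp : smoothRamp ε r ^ 2 ≤ r ^ 2 :=
      pow_le_pow_left₀ (smoothRamp_nonneg hr) (smoothRamp_le_self hr) 2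
    exact div_le_of_le_mul₀ hr hr (by nlinarith [sq_nonneg (smoothRamp ε r)])
  linarith

theorem sq_sub_le_norm_trialState_sq (hε : 0 < ε) (x : Config 2) :
    euclidNormSq (relPos x) ^ 2 - 4 * ε * euclidNormSq (relPos x) ≤ ‖trialState ε x‖ ^ 2 := by
  rw [trialState, Complex.norm_real, Real.norm_eq_abs, sq_abs]
  exact sq_sub_le_smoothRamp_sq hε (euclidNormSq_nonneg _)

end TrialState

theorem Continuous.integrableOn_of_isBounded {X E : Type*} [MetricSpace X] [ProperSpace X]
    [MeasurableSpace X] [OpensMeasurableSpace X] {μ : Measure X} [IsFiniteMeasureOnCompacts μ]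
    [NormedAddCommGroup E] {f : X → E} (hf : Continuous f) {s : Set X}
    (hs : Bornology.IsBounded s) : IntegrableOn f s μ :=
  (hf.continuousOn.integrableOn_compact hs.isCompact_closure).mono_set subset_closure

theorem isBounded_Q0 : Bornology.IsBounded Q0 :=
  Metric.isBounded_Ioo 0 1 |>.prod (Metric.isBounded_Ioo 0 1)

theorem integral_Q0_eq_iterated {f : Plane → ℝ} (hf : IntegrableOn f Q0) :
    ∫ p in Q0, f p = ∫ a in (0 : ℝ)..1, ∫ b in (0 : ℝ)..1, f (a, b) := by
  rw [Q0, Measure.volume_eq_prod, setIntegral_prod f (by rwa [Q0, Measure.volume_eq_prod] at hf)]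
  simp only [intervalIntegral.integral_of_le zero_le_one, integral_Ioc_eq_integral_Ioo]

theorem intervalIntegral_sub_pow (a : ℝ) (n : ℕ) :
    ∫ b in (0 : ℝ)..1, (a - b) ^ n = (a ^ (n + 1) - (a - 1) ^ (n + 1)) / (n + 1) := by
  rw [intervalIntegral.integral_comp_sub_left (fun y => y ^ n) a, integral_pow, sub_zero]

theorem integral_Q0_sub_pow (n : ℕ) :
    ∫ p in Q0, (p.1 - p.2) ^ n = (1 + (-1) ^ n) / ((n + 1) * (n + 2)) := by
  rw [integral_Q0_eq_iterated ((by fun_prop : Continuous fun p : Plane => (p.1 - p.2) ^ n)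
    |>.integrableOn_of_isBounded isBounded_Q0)]
  simp only [intervalIntegral_sub_pow]
  rw [intervalIntegral.integral_div, intervalIntegral.integral_sub
    ((continuous_pow (n + 1)).intervalIntegrable 0 1)
    ((by fun_prop : Continuous fun a : ℝ => (a - 1) ^ (n + 1)).intervalIntegrable 0 1),
    intervalIntegral.integral_comp_sub_right (fun y => y ^ (n + 1)) 1, integral_pow, integral_pow]
  have hsign : ((0 : ℝ) - 1) ^ (n + 1 + 1) = (-1) ^ n := by ring
  simp only [hsign, one_pow, sub_self, zero_pow (Nat.succ_ne_zero _)]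
  push_cast
  field_simp
  ring

def coordSplit : Config 2 ≃ᵐ (ℝ × ℝ) × (ℝ × ℝ) :=
  (MeasurableEquiv.arrowProdEquivProdArrow ℝ ℝ (Fin 2)).trans
    (MeasurableEquiv.finTwoArrow.prodCongr MeasurableEquiv.finTwoArrow)

theorem measurePreserving_coordSplit : MeasurePreserving coordSplit volume volume := by
  have h := (volume_preserving_finTwoArrow ℝ).prod (volume_preserving_finTwoArrow ℝ)
  exact h.comp (volume_measurePreserving_arrowProdEquivProdArrow ℝ ℝ (Fin 2))

theorem coordSplit_apply (x : Config 2) :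
    coordSplit x = (((x 0).1, (x 1).1), ((x 0).2, (x 1).2)) := rfl

theorem coordSplit_preimage_Q0_prod : coordSplit ⁻¹' (Q0 ×ˢ Q0) = cube 2 Q0 := by
  ext x
  simp only [mem_preimage, coordSplit_apply, cube, Q0, mem_pi, mem_univ, forall_const,
    Fin.forall_fin_two, mem_prod, mem_Ioo]
  tauto

theorem setIntegral_cube_two_relPos (h : Plane → ℝ) :
    ∫ x in cube 2 Q0, h (relPos x) = ∫ z in Q0 ×ˢ Q0, h (z.1.1 - z.1.2, z.2.1 - z.2.2) := by
  rw [← coordSplit_preimage_Q0_prod]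
  exact measurePreserving_coordSplit.setIntegral_preimage_emb coordSplit.measurableEmbedding
    (fun z => h (z.1.1 - z.1.2, z.2.1 - z.2.2)) _

theorem integral_cube_relPos_pow_mul_pow (m n : ℕ) :
    ∫ x in cube 2 Q0, (relPos x).1 ^ m * (relPos x).2 ^ n =
      (∫ p in Q0, (p.1 - p.2) ^ m) * ∫ p in Q0, (p.1 - p.2) ^ n := by
  rw [setIntegral_cube_two_relPos (fun v => v.1 ^ m * v.2 ^ n)]
  exact setIntegral_prod_mul (μ := volume) (ν := volume)
    (fun p : Plane => (p.1 - p.2) ^ m) (fun p => (p.1 - p.2) ^ n) Q0 Q0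

theorem Continuous.integrableOn_cube_Q0 {N : ℕ} {f : Config N → ℝ} (hf : Continuous f) :
    IntegrableOn f (cube N Q0) :=
  hf.integrableOn_of_isBounded (.pi fun _ => isBounded_Q0)

theorem integrableOn_cube_relPos_pow_mul_pow (m n : ℕ) :
    IntegrableOn (fun x => (relPos x).1 ^ m * (relPos x).2 ^ n) (cube 2 Q0) :=
  (by fun_prop : Continuous _).integrableOn_cube_Q0

theorem integral_cube_euclidNormSq_relPos :
    ∫ x in cube 2 Q0, euclidNormSq (relPos x) = 1 / 3 := by
  have hsplit : ∀ x : Config 2, euclidNormSq (relPos x)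
      = (relPos x).1 ^ 2 * (relPos x).2 ^ 0 + (relPos x).1 ^ 0 * (relPos x).2 ^ 2 := by
    intro x; unfold euclidNormSq; ring
  simp only [hsplit]
  rw [integral_add (integrableOn_cube_relPos_pow_mul_pow 2 0)
    (integrableOn_cube_relPos_pow_mul_pow 0 2)]
  simp only [integral_cube_relPos_pow_mul_pow, integral_Q0_sub_pow]
  norm_num

theorem integral_cube_euclidNormSq_relPos_sq :
    ∫ x in cube 2 Q0, euclidNormSq (relPos x) ^ 2 = 17 / 90 := by
  have hsplit : ∀ x : Config 2, euclidNormSq (relPos x) ^ 2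
      = (relPos x).1 ^ 4 * (relPos x).2 ^ 0 + 2 * ((relPos x).1 ^ 2 * (relPos x).2 ^ 2)
        + (relPos x).1 ^ 0 * (relPos x).2 ^ 4 := by
    intro x; unfold euclidNormSq; ring
  simp only [hsplit]
  have h22 := (integrableOn_cube_relPos_pow_mul_pow 2 2).const_mul 2
  rw [integral_add (by exact (integrableOn_cube_relPos_pow_mul_pow 4 0).add h22)
      (integrableOn_cube_relPos_pow_mul_pow 0 4),
    integral_add (integrableOn_cube_relPos_pow_mul_pow 4 0) h22, integral_const_mul]
  simp only [integral_cube_relPos_pow_mul_pow, integral_Q0_sub_pow]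
  norm_num

section TrialEnergy

variable {ε α : ℝ}

theorem kinE_trialState_le (hα : |α| ≤ 1) : kinE 2 α Q0 (trialState ε) ≤ 10 / 3 := by
  have hbound : ∀ j, ∫ x in cube 2 Q0, DSq 2 α j (trialState ε) x ≤ 5 / 3 := fun j =>
    calc ∫ x in cube 2 Q0, DSq 2 α j (trialState ε) x
        ≤ ∫ x in cube 2 Q0, 5 * euclidNormSq (relPos x) :=
          integral_mono_of_nonneg (ae_of_all _ (DSq_nonneg j))
            (by fun_prop : Continuous _).integrableOn_cube_Q0 (ae_of_all _ (DSq_trialState_le hα j))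
      _ = 5 / 3 := by rw [integral_const_mul, integral_cube_euclidNormSq_relPos]; norm_num
  rw [kinE, Fin.sum_univ_two]
  linarith [hbound 0, hbound 1]

theorem normSq_trialState_ge (hε : 0 < ε) : 17 / 90 - 4 * ε / 3 ≤ normSq 2 Q0 (trialState ε) :=
  calc 17 / 90 - 4 * ε / 3
      = ∫ x in cube 2 Q0, (euclidNormSq (relPos x) ^ 2 - 4 * ε * euclidNormSq (relPos x)) := by
        rw [integral_sub (by fun_prop : Continuous _).integrableOn_cube_Q0
          (by fun_prop : Continuous _).integrableOn_cube_Q0, integral_const_mul,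
          integral_cube_euclidNormSq_relPos, integral_cube_euclidNormSq_relPos_sq]
        ring
    _ ≤ normSq 2 Q0 (trialState ε) :=
        integral_mono (by fun_prop : Continuous _).integrableOn_cube_Q0
          ((trialState_admissible hε).smooth.continuous.norm.pow 2).integrableOn_cube_Q0
          (sq_sub_le_norm_trialState_sq hε)

end TrialEnergy

/-- for every `α ∈ [0,1]`, the two-anyon Neumann energy on the unit square
satisfies `E^N_2(α) ≤ 2π²`. -/
theorem two_anyon_neumann_upper_bound (α : ℝ) (hα : α ∈ Set.Icc (0 : ℝ) 1) :
    EN 2 α ≤ 2 * π ^ 2 := by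
  have hε : (0 : ℝ) < 1 / 1000 := by norm_num
  have hnorm := normSq_trialState_ge hε
  calc EN 2 α
      ≤ kinE 2 α Q0 (trialState (1 / 1000)) / normSq 2 Q0 (trialState (1 / 1000)) :=
        neumannE_le_kinE_div_normSq two_ne_zero (trialState_admissible hε) (by linarith)
    _ ≤ (10 / 3) / (17 / 90 - 4 * (1 / 1000) / 3) :=
        div_le_div₀ (by norm_num) (kinE_trialState_le (abs_le.2 ⟨by linarith [hα.1], hα.2⟩))
          (by norm_num) hnorm
    _ ≤ 2 * π ^ 2 := by nlinarith [pi_gt_three]
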